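/- Let d ≥ 1, N ≥ 1, let x₀,…,x_N ∈ ℝ^d, and suppose S ∈ 𝒮₃⁰ satisfies S(i) = x_i for every i = 0,…,N. Then for every probability measure P on Ω = C([0,N];ℝ^d) that gives full measure to the set of twice continuously differentiable paths and satisfies (X_i)_#P = δ_{x_i} (the Dirac measure at x_i) for every i = 0,…,N, one has ∫_Ω ∫₀^N ‖ω''(t)‖² dt dP(ω) ≥ ∫₀^N ‖S''(t)‖² dt, with equality if and only if P = δ_S, the Dirac measure on Ω concentrated at the path S. -/

import Mathlib

/-!
Write `E(f) = ∫₀ᴺ ‖f''‖²`. Let `f` be C² with the same knot values as the natural spline `u`,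
and `g = f - u`. On each `[i, i + 1]` the function `u''` is affine, so two integrations by parts
turn `∫ ⟪u'', g''⟫` into the boundary terms `⟪u'', g'⟫` (as `g` vanishes at the knots), which
telescope and vanish because `u''(0) = u''(N) = 0`. Hence `E(f) = E(u) + E(g)`. Since `g` vanishes
at `0` and `1`, Rolle's theorem for `s ↦ ⟪g t, g s⟫` and Cauchy–Schwarz give
`‖g t‖² ≤ N³ E(g)` on `[0, N]`. So `P`-almost every path satisfies
`dist(ω, S)² ≤ N³ (E(ω) - E(S))`; integrating gives the inequality, and equality forces `ω = S`
almost surely.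

The hypothesis `P(C²) = 1` is usable because the set of C² paths is Borel: it is the injective
continuous image of the closed set of triples `(ω, ω', ω'')` related by integration
(Lusin–Souslin).
-/

open MeasureTheory

noncomputable section

/-- The path space `Ω = C([0,N]; ℝ^d)` with the uniform metric. -/
abbrev PathSpace (d N : ℕ) := C(Set.Icc (0:ℝ) (N:ℝ), EuclideanSpace ℝ (Fin d))

instance (d N : ℕ) : MeasurableSpace (PathSpace d N) := borel _
instance (d N : ℕ) : BorelSpace (PathSpace d N) := ⟨rfl⟩

/-- The extension of a path `ω : [0,N] → ℝ^d` to all of `ℝ` by clamping the time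
variable to `[0,N]`. -/
def pathExt (d N : ℕ) (ω : PathSpace d N) : ℝ → EuclideanSpace ℝ (Fin d) :=
  fun t => ω (Set.projIcc (0:ℝ) (N:ℝ) (Nat.cast_nonneg N) t)

/-- The mean-squared acceleration `∫₀^N ‖ω''(t)‖² dt` of a path. -/
def energy (d N : ℕ) (ω : PathSpace d N) : ℝ :=
  ∫ t in (0:ℝ)..(N:ℝ), ‖deriv (deriv (pathExt d N ω)) t‖ ^ 2

/-- The set of twice continuously differentiable paths: restrictions to `[0,N]`
of C² functions on `ℝ`. -/
def C2paths (d N : ℕ) : Set (PathSpace d N) :=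
  { ω | ∃ f : ℝ → EuclideanSpace ℝ (Fin d), ContDiff ℝ 2 f ∧
      ∀ t : Set.Icc (0:ℝ) (N:ℝ), ω t = f t }

/-- The set `𝒮₃⁰` of natural splines with knots `0, 1, …, N`: C² paths which on each
interval `[i, i+1]` coincide with a cubic polynomial with coefficients in `ℝ^d`, and
whose second derivative vanishes at `0` and at `N`. -/
def Spline30 (d N : ℕ) : Set (PathSpace d N) :=
  { ω | ∃ f : ℝ → EuclideanSpace ℝ (Fin d), ContDiff ℝ 2 f ∧
      (∀ t : Set.Icc (0:ℝ) (N:ℝ), ω t = f t) ∧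
      (∀ i : Fin N, ∃ a₀ a₁ a₂ a₃ : EuclideanSpace ℝ (Fin d),
        ∀ t ∈ Set.Icc ((i : ℕ) : ℝ) (((i : ℕ) : ℝ) + 1),
          f t = a₀ + t • a₁ + (t ^ 2) • a₂ + (t ^ 3) • a₃) ∧
      deriv (deriv f) 0 = 0 ∧ deriv (deriv f) (N:ℝ) = 0 }

open Set intervalIntegral
open scoped RealInnerProductSpace Interval

section NormedSpace

variable {E : Type*} [NormedAddCommGroup E] [NormedSpace ℝ E]

lemma contDiff_two_of_hasDerivAt {f f' f'' : ℝ → E} (hf : ∀ t, HasDerivAt f (f' t) t)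
    (hf' : ∀ t, HasDerivAt f' (f'' t) t) (hf'' : Continuous f'') : ContDiff ℝ 2 f := by
  rw [show (2 : WithTop ℕ∞) = 1 + 1 from rfl, contDiff_succ_iff_deriv,
    funext fun t => (hf t).deriv, contDiff_one_iff_deriv, funext fun t => (hf' t).deriv]
  exact ⟨fun t => (hf t).differentiableAt, by simp, fun t => (hf' t).differentiableAt, hf''⟩

lemma deriv_deriv_sub {f u : ℝ → E} (hf : ContDiff ℝ 2 f) (hu : ContDiff ℝ 2 u) :
    deriv (deriv (f - u)) = deriv (deriv f) - deriv (deriv u) := by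
  have h : deriv (f - u) = deriv f - deriv u :=
    funext fun t => deriv_sub (hf.differentiable two_ne_zero t) (hu.differentiable two_ne_zero t)
  rw [h]
  exact funext fun t => deriv_sub (hf.differentiable_deriv_two t) (hu.differentiable_deriv_two t)

lemma eqOn_deriv_deriv_of_eqOn_Icc {f g : ℝ → E} {a b : ℝ} (hab : a < b)
    (hf : Continuous (deriv (deriv f))) (hg : Continuous (deriv (deriv g)))
    (hfg : EqOn f g (Icc a b)) : EqOn (deriv (deriv f)) (deriv (deriv g)) (Icc a b) := by
  rw [← closure_Ioo hab.ne]
  exact (((hfg.mono Ioo_subset_Icc_self).deriv isOpen_Ioo).deriv isOpen_Ioo).closure hf hg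

lemma deriv_deriv_cubic (a₀ a₁ a₂ a₃ : E) :
    deriv (deriv fun t : ℝ => a₀ + t • a₁ + t ^ 2 • a₂ + t ^ 3 • a₃) =
      fun t => (2 : ℝ) • a₂ + (6 * t) • a₃ := by
  have h1 : deriv (fun t : ℝ => a₀ + t • a₁ + t ^ 2 • a₂ + t ^ 3 • a₃) =
      fun t => a₁ + (2 * t) • a₂ + (3 * t ^ 2) • a₃ := by
    ext t
    exact (((((hasDerivAt_id t).smul_const a₁).const_add a₀).add
      ((hasDerivAt_pow 2 t).smul_const a₂)).add
        ((hasDerivAt_pow 3 t).smul_const a₃)).deriv.trans (by simp)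
  ext t
  rw [h1]
  exact ((((hasDerivAt_id t).const_mul 2).smul_const a₂).const_add a₁).add
    (((hasDerivAt_pow 2 t).const_mul 3).smul_const a₃) |>.deriv.trans (by norm_num; ring_nf)

lemma norm_integral_le_integral_norm_of_mem_Icc {f : ℝ → E} (hf : Continuous f)
    {a b c d : ℝ} (ha : a ∈ Icc c d) (hb : b ∈ Icc c d) :
    ‖∫ t in a..b, f t‖ ≤ ∫ t in c..d, ‖f t‖ := by
  calc ‖∫ t in a..b, f t‖ ≤ ∫ t in Ι a b, ‖f t‖ := norm_integral_le_integral_norm_uIoc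
    _ ≤ ∫ t in Ioc c d, ‖f t‖ :=
      setIntegral_mono_set (hf.norm.integrableOn_Icc.mono_set Ioc_subset_Icc_self)
        (Filter.Eventually.of_forall fun _ => norm_nonneg _)
        (Ioc_subset_Ioc (le_min ha.1 hb.1) (max_le ha.2 hb.2)).eventuallyLE
    _ = ∫ t in c..d, ‖f t‖ := (integral_of_le (ha.1.trans ha.2)).symm

-- A C² function is a cubic on `[i, i + 1]` exactly when its second derivative is affine there.
structure IsNaturalSpline (N : ℕ) (u : ℝ → E) : Prop where
  contDiff : ContDiff ℝ 2 u
  deriv_deriv_affine :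
    ∀ i < N, ∃ α β : E, ∀ t ∈ Icc (i : ℝ) (i + 1), deriv (deriv u) t = α + t • β
  deriv_deriv_zero : deriv (deriv u) 0 = 0
  deriv_deriv_natCast : deriv (deriv u) N = 0

end NormedSpace

lemma abs_le_mul_integral_abs_of_hasDerivAt {u u' u'' : ℝ → ℝ}
    (hu : ∀ s, HasDerivAt u (u' s) s) (hu' : ∀ s, HasDerivAt u' (u'' s) s)
    (hu'' : Continuous u'') {c L : ℝ} (hc : 0 < c) (hcL : c ≤ L) (hu₀ : u 0 = 0) (hu_c : u c = 0)
    {t : ℝ} (ht : t ∈ Icc 0 L) : |u t| ≤ L * ∫ s in 0..L, |u'' s| := by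
  have hu_cont : Continuous u := continuous_iff_continuousAt.2 fun s => (hu s).continuousAt
  have hu'_cont : Continuous u' := continuous_iff_continuousAt.2 fun s => (hu' s).continuousAt
  obtain ⟨ξ, hξ, hu'ξ⟩ := exists_hasDerivAt_eq_zero hc hu_cont.continuousOn (hu₀.trans hu_c.symm)
    fun s _ => hu s
  have hu'_le : ∀ s ∈ Icc 0 L, ‖u' s‖ ≤ ∫ r in 0..L, |u'' r| := by
    intro s hs
    have := norm_integral_le_integral_norm_of_mem_Icc hu'' ⟨hξ.1.le, hξ.2.le.trans hcL⟩ hs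
    rwa [integral_eq_sub_of_hasDerivAt (fun r _ => hu' r) (hu''.intervalIntegrable _ _), hu'ξ,
      sub_zero] at this
  have hu_eq : u t = ∫ s in 0..t, u' s := by
    rw [integral_eq_sub_of_hasDerivAt (fun r _ => hu r) (hu'_cont.intervalIntegrable _ _), hu₀,
      sub_zero]
  calc |u t| = ‖∫ s in 0..t, u' s‖ := by rw [hu_eq, Real.norm_eq_abs]
    _ ≤ (∫ r in 0..L, |u'' r|) * |t - 0| := norm_integral_le_of_norm_le_const fun s hs =>
        hu'_le s ⟨(uIoc_of_le ht.1 ▸ hs).1.le, (uIoc_of_le ht.1 ▸ hs).2.trans ht.2⟩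
    _ ≤ L * ∫ s in 0..L, |u'' s| := by
        rw [sub_zero, abs_of_nonneg ht.1, mul_comm]
        gcongr
        · exact integral_nonneg (hc.le.trans hcL) fun _ _ => abs_nonneg _
        · exact ht.2

lemma sq_integral_le_mul_integral_sq {φ : ℝ → ℝ} (hφ : Continuous φ) {L : ℝ} (hL : 0 ≤ L) :
    (∫ s in 0..L, φ s) ^ 2 ≤ L * ∫ s in 0..L, φ s ^ 2 := by
  set A := ∫ s in 0..L, φ s
  set B := ∫ s in 0..L, φ s ^ 2
  have hquad : ∀ x : ℝ, 0 ≤ L * (x * x) + (-2 * A) * x + B := by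
    intro x
    have hexpand : ∫ s in 0..L, (φ s - x) ^ 2 = L * (x * x) + (-2 * A) * x + B := by
      have h1 : IntervalIntegrable (fun s => φ s ^ 2) volume 0 L :=
        (hφ.pow 2).intervalIntegrable _ _
      have h2 : IntervalIntegrable (fun s => 2 * x * φ s) volume 0 L :=
        (hφ.const_mul _).intervalIntegrable _ _
      have hpt : ∀ s, (φ s - x) ^ 2 = φ s ^ 2 - 2 * x * φ s + x ^ 2 := fun s => by ring
      simp_rw [hpt]
      rw [integral_add (h1.sub h2) intervalIntegrable_const, integral_sub h1 h2,
        intervalIntegral.integral_const_mul, intervalIntegral.integral_const]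
      simp only [sub_zero, smul_eq_mul, A, B]
      ring
    rw [← hexpand]
    exact integral_nonneg hL fun _ _ => sq_nonneg _
  have := discrim_le_zero hquad
  rw [discrim] at this
  nlinarith

section InnerProductSpace

variable {E : Type*} [NormedAddCommGroup E] [InnerProductSpace ℝ E]

lemma integral_inner_affine_deriv_deriv (α β : E) {g : ℝ → E} (hg : ContDiff ℝ 2 g) (a b : ℝ) :
    ∫ t in a..b, ⟪α + t • β, deriv (deriv g) t⟫ =
      (⟪α + b • β, deriv g b⟫ - ⟪β, g b⟫) - (⟪α + a • β, deriv g a⟫ - ⟪β, g a⟫) := by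
  refine integral_eq_sub_of_hasDerivAt
    (f := fun t => ⟪α + t • β, deriv g t⟫ - ⟪β, g t⟫) (fun t _ => ?_) ?_
  · have hline : HasDerivAt (fun t : ℝ => α + t • β) β t := by
      simpa using ((hasDerivAt_id t).smul_const β).const_add α
    exact ((hline.inner ℝ (hg.differentiable_deriv_two t).hasDerivAt).sub
      ((hasDerivAt_const t β).inner ℝ ((hg.differentiable two_ne_zero) t).hasDerivAt)).congr_deriv
      (by rw [inner_zero_left]; ring)
  · exact (by fun_prop : Continuous fun t : ℝ => α + t • β).inner
      hg.deriv'.continuous_deriv_one |>.intervalIntegrable _ _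

lemma integral_norm_add_sq_of_integral_inner_eq_zero {u v : ℝ → E} (hu : Continuous u)
    (hv : Continuous v) {a b : ℝ} (huv : ∫ t in a..b, ⟪u t, v t⟫ = 0) :
    ∫ t in a..b, ‖u t + v t‖ ^ 2 = (∫ t in a..b, ‖u t‖ ^ 2) + ∫ t in a..b, ‖v t‖ ^ 2 := by
  simp_rw [norm_add_sq_real]
  have hu2 : IntervalIntegrable (fun t => ‖u t‖ ^ 2) volume a b :=
    (hu.norm.pow 2).intervalIntegrable _ _
  have hv2 : IntervalIntegrable (fun t => ‖v t‖ ^ 2) volume a b :=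
    (hv.norm.pow 2).intervalIntegrable _ _
  have huv' : IntervalIntegrable (fun t => 2 * ⟪u t, v t⟫) volume a b :=
    ((hu.inner hv).const_mul 2).intervalIntegrable _ _
  rw [integral_add (hu2.add huv') hv2, integral_add hu2 huv',
    intervalIntegral.integral_const_mul, huv, mul_zero, add_zero]

lemma norm_le_mul_integral_norm_deriv_deriv {g : ℝ → E} (hg : ContDiff ℝ 2 g) {c L : ℝ}
    (hc : 0 < c) (hcL : c ≤ L) (hg₀ : g 0 = 0) (hg_c : g c = 0) {t : ℝ} (ht : t ∈ Icc 0 L) :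
    ‖g t‖ ≤ L * ∫ s in 0..L, ‖deriv (deriv g) s‖ := by
  set v := g t
  have hL : 0 ≤ L := hc.le.trans hcL
  have hg'' := hg.deriv'.continuous_deriv_one
  have hinner : ∀ {φ φ' : ℝ → E} s, HasDerivAt φ (φ' s) s →
      HasDerivAt (fun r => ⟪v, φ r⟫) ⟪v, φ' s⟫ s := fun s h =>
    ((hasDerivAt_const s v).inner ℝ h).congr_deriv (by rw [inner_zero_left, add_zero])
  have hu := abs_le_mul_integral_abs_of_hasDerivAt
    (fun s => hinner s ((hg.differentiable two_ne_zero) s).hasDerivAt)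
    (fun s => hinner s (hg.differentiable_deriv_two s).hasDerivAt)
    (continuous_const.inner hg'') hc hcL (by simp [hg₀]) (by simp [hg_c]) ht
  have hbound : ∫ s in 0..L, |⟪v, deriv (deriv g) s⟫| ≤ ‖v‖ * ∫ s in 0..L, ‖deriv (deriv g) s‖ := by
    rw [← intervalIntegral.integral_const_mul]
    exact integral_mono_on hL ((continuous_const.inner hg'').abs.intervalIntegrable _ _)
      ((continuous_const.mul hg''.norm).intervalIntegrable _ _)
      fun s _ => abs_real_inner_le_norm _ _
  have hsq : ‖v‖ * ‖v‖ ≤ ‖v‖ * (L * ∫ s in 0..L, ‖deriv (deriv g) s‖) := by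
    calc ‖v‖ * ‖v‖ = ⟪v, v⟫ := (real_inner_self_eq_norm_mul_norm v).symm
      _ ≤ |⟪v, v⟫| := le_abs_self _
      _ ≤ L * ∫ s in 0..L, |⟪v, deriv (deriv g) s⟫| := hu
      _ ≤ L * (‖v‖ * ∫ s in 0..L, ‖deriv (deriv g) s‖) := by gcongr
      _ = ‖v‖ * (L * ∫ s in 0..L, ‖deriv (deriv g) s‖) := by ring
  rcases (norm_nonneg v).eq_or_lt with hv | hv
  · rw [← hv]
    exact mul_nonneg hL (integral_nonneg hL fun _ _ => norm_nonneg _)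
  · exact le_of_mul_le_mul_left hsq hv

lemma sq_norm_le_mul_integral_sq_norm_deriv_deriv {g : ℝ → E} (hg : ContDiff ℝ 2 g) {c L : ℝ}
    (hc : 0 < c) (hcL : c ≤ L) (hg₀ : g 0 = 0) (hg_c : g c = 0) {t : ℝ} (ht : t ∈ Icc 0 L) :
    ‖g t‖ ^ 2 ≤ L ^ 3 * ∫ s in 0..L, ‖deriv (deriv g) s‖ ^ 2 := by
  have hL : 0 ≤ L := hc.le.trans hcL
  calc ‖g t‖ ^ 2 ≤ (L * ∫ s in 0..L, ‖deriv (deriv g) s‖) ^ 2 :=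
        pow_le_pow_left₀ (norm_nonneg _)
          (norm_le_mul_integral_norm_deriv_deriv hg hc hcL hg₀ hg_c ht) 2
    _ = L ^ 2 * (∫ s in 0..L, ‖deriv (deriv g) s‖) ^ 2 := by ring
    _ ≤ L ^ 2 * (L * ∫ s in 0..L, ‖deriv (deriv g) s‖ ^ 2) := by
        gcongr
        exact sq_integral_le_mul_integral_sq hg.deriv'.continuous_deriv_one.norm hL
    _ = L ^ 3 * ∫ s in 0..L, ‖deriv (deriv g) s‖ ^ 2 := by ring

namespace IsNaturalSpline

variable {N : ℕ} {u f : ℝ → E}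

theorem integral_inner_deriv_deriv_eq_zero (hu : IsNaturalSpline N u) {g : ℝ → E}
    (hg : ContDiff ℝ 2 g) (hg_knots : ∀ i ≤ N, g i = 0) :
    ∫ t in (0 : ℝ)..N, ⟪deriv (deriv u) t, deriv (deriv g) t⟫ = 0 := by
  set G : ℝ → ℝ := fun t => ⟪deriv (deriv u) t, deriv g t⟫
  have hcont : Continuous fun t => ⟪deriv (deriv u) t, deriv (deriv g) t⟫ :=
    hu.contDiff.deriv'.continuous_deriv_one.inner hg.deriv'.continuous_deriv_one
  have hpiece : ∀ i ∈ Finset.range N,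
      ∫ t in (i : ℝ)..((i + 1 : ℕ) : ℝ), ⟪deriv (deriv u) t, deriv (deriv g) t⟫ =
        G (i + 1 : ℕ) - G i := by
    intro i hi
    obtain ⟨α, β, hαβ⟩ := hu.deriv_deriv_affine i (Finset.mem_range.1 hi)
    have hi₀ : (i : ℝ) ∈ Icc (i : ℝ) (i + 1) := ⟨le_rfl, by linarith⟩
    have hi₁ : (i : ℝ) + 1 ∈ Icc (i : ℝ) (i + 1) := ⟨by linarith, le_rfl⟩
    have hg_i := hg_knots i (Finset.mem_range.1 hi).le
    have hg_i₁ := hg_knots (i + 1) (Finset.mem_range.1 hi)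
    push_cast at hg_i₁ ⊢
    have hon : EqOn (fun t => ⟪deriv (deriv u) t, deriv (deriv g) t⟫)
        (fun t => ⟪α + t • β, deriv (deriv g) t⟫) (uIcc (i : ℝ) (i + 1)) := by
      intro t ht
      rw [uIcc_of_le (by linarith)] at ht
      simp only [hαβ t ht]
    rw [integral_congr hon, integral_inner_affine_deriv_deriv α β hg]
    simp [G, hαβ _ hi₀, hαβ _ hi₁, hg_i, hg_i₁]
  have hsum := sum_integral_adjacent_intervals (a := fun i : ℕ => (i : ℝ)) (n := N) (μ := volume)
    (fun k _ => hcont.intervalIntegrable _ _)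
  rw [Finset.sum_congr rfl hpiece, Finset.sum_range_sub (fun i : ℕ => G i)] at hsum
  simp only [Nat.cast_zero] at hsum
  rw [← hsum]
  simp [G, hu.deriv_deriv_zero, hu.deriv_deriv_natCast]

theorem integral_sq_norm_deriv_deriv_eq_add (hu : IsNaturalSpline N u) (hf : ContDiff ℝ 2 f)
    (h_knots : ∀ i ≤ N, f i = u i) :
    ∫ t in (0 : ℝ)..N, ‖deriv (deriv f) t‖ ^ 2 =
      (∫ t in (0 : ℝ)..N, ‖deriv (deriv u) t‖ ^ 2) +
        ∫ t in (0 : ℝ)..N, ‖deriv (deriv (f - u)) t‖ ^ 2 := by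
  have horth := hu.integral_inner_deriv_deriv_eq_zero (hf.sub hu.contDiff)
    fun i hi => sub_eq_zero.2 (h_knots i hi)
  have hsplit : deriv (deriv f) = fun t => deriv (deriv u) t + deriv (deriv (f - u)) t := by
    rw [deriv_deriv_sub hf hu.contDiff]
    simp
  rw [hsplit]
  exact integral_norm_add_sq_of_integral_inner_eq_zero hu.contDiff.deriv'.continuous_deriv_one
    (hf.sub hu.contDiff).deriv'.continuous_deriv_one horth

theorem sq_norm_sub_le (hu : IsNaturalSpline N u) (hN : 1 ≤ N) (hf : ContDiff ℝ 2 f)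
    (h_knots : ∀ i ≤ N, f i = u i) {t : ℝ} (ht : t ∈ Icc (0 : ℝ) N) :
    ‖f t - u t‖ ^ 2 ≤ (N : ℝ) ^ 3 * ((∫ s in (0 : ℝ)..N, ‖deriv (deriv f) s‖ ^ 2) -
      ∫ s in (0 : ℝ)..N, ‖deriv (deriv u) s‖ ^ 2) := by
  rw [hu.integral_sq_norm_deriv_deriv_eq_add hf h_knots, add_sub_cancel_left]
  exact sq_norm_le_mul_integral_sq_norm_deriv_deriv (hf.sub hu.contDiff) one_pos
    (by exact_mod_cast hN) (by simpa [sub_eq_zero] using h_knots 0 N.zero_le)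
    (by simpa [sub_eq_zero] using h_knots 1 hN) ht

end IsNaturalSpline

end InnerProductSpace

lemma ae_eq_of_map_eq_dirac {α β : Type*} [MeasurableSpace α] [MeasurableSpace β]
    [MeasurableSingletonClass β] {μ : Measure α} {f : α → β} {b : β} (hf : AEMeasurable f μ)
    (h : μ.map f = Measure.dirac b) : ∀ᵐ a ∂μ, f a = b :=
  ae_of_ae_map hf (p := (· = b)) (by rw [h, ae_dirac_eq]; exact Filter.eventually_pure.2 rfl)

theorem ofReal_le_lintegral_and_lintegral_eq_iff_eq_dirac {X : Type*} [MetricSpace X]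
    [MeasurableSpace X] [OpensMeasurableSpace X] {P : Measure X} [IsProbabilityMeasure P]
    {F : X → ℝ} {s : X} {C : ℝ} (hC : 0 < C) (hFs : 0 ≤ F s)
    (hF : ∀ᵐ x ∂P, dist x s ^ 2 ≤ C * (F x - F s)) :
    ENNReal.ofReal (F s) ≤ ∫⁻ x, ENNReal.ofReal (F x) ∂P ∧
      (∫⁻ x, ENNReal.ofReal (F x) ∂P = ENNReal.ofReal (F s) ↔ P = Measure.dirac s) := by
  set D : X → ENNReal := fun x => ENNReal.ofReal (dist x s ^ 2 / C)
  have hD : Measurable D :=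
    (by fun_prop : Continuous fun x => dist x s ^ 2 / C).measurable.ennreal_ofReal
  have hsplit : ENNReal.ofReal (F s) + ∫⁻ x, D x ∂P ≤ ∫⁻ x, ENNReal.ofReal (F x) ∂P := by
    calc ENNReal.ofReal (F s) + ∫⁻ x, D x ∂P = ∫⁻ x, ENNReal.ofReal (F s) + D x ∂P := by
          rw [lintegral_add_left measurable_const, lintegral_const, measure_univ, mul_one]
      _ ≤ ∫⁻ x, ENNReal.ofReal (F x) ∂P := lintegral_mono_ae <| hF.mono fun x hx => by
          rw [← ENNReal.ofReal_add hFs (by positivity)]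
          have : dist x s ^ 2 / C ≤ F x - F s := by rwa [div_le_iff₀' hC]
          exact ENNReal.ofReal_le_ofReal (by linarith)
  refine ⟨le_self_add.trans hsplit, fun heq => ?_, ?_⟩
  · have hD₀ : ∫⁻ x, D x ∂P = 0 := by
      rw [heq] at hsplit
      exact nonpos_iff_eq_zero.1 (ENNReal.le_of_add_le_add_left ENNReal.ofReal_ne_top
        (hsplit.trans (add_zero _).ge))
    have hae : ∀ᵐ x ∂P, x = s := by
      filter_upwards [(lintegral_eq_zero_iff hD).1 hD₀] with x hx
      have : dist x s ^ 2 / C ≤ 0 := ENNReal.ofReal_eq_zero.1 hx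
      rw [div_le_iff₀ hC, zero_mul] at this
      exact dist_le_zero.1 (by nlinarith [dist_nonneg (x := x) (y := s)])
    calc P = P.map id := Measure.map_id.symm
      _ = P.map fun _ => s := Measure.map_congr hae
      _ = Measure.dirac s := by rw [Measure.map_const, measure_univ, one_smul]
  · rintro rfl
    rw [lintegral_dirac]

section PathSpace

variable {d N : ℕ}

lemma pathExt_of_mem (ω : PathSpace d N) {t : ℝ} (ht : t ∈ Icc (0 : ℝ) N) :
    pathExt d N ω t = ω ⟨t, ht⟩ := by
  simp [pathExt, projIcc_of_mem _ ht]

lemma continuous_pathExt (ω : PathSpace d N) : Continuous (pathExt d N ω) :=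
  ω.continuous.comp continuous_projIcc

lemma continuous_pathExt_uncurry :
    Continuous fun p : PathSpace d N × ℝ => pathExt d N p.1 p.2 := by
  unfold pathExt
  fun_prop

lemma energy_eq_integral {ω : PathSpace d N} {f : ℝ → EuclideanSpace ℝ (Fin d)}
    (hωf : ∀ t, ω t = f t) : energy d N ω = ∫ t in (0 : ℝ)..N, ‖deriv (deriv f) t‖ ^ 2 := by
  have hIoo : EqOn (pathExt d N ω) f (Ioo 0 N) := fun t ht => by
    rw [pathExt_of_mem ω (Ioo_subset_Icc_self ht), hωf]
  exact integral_congr_Ioo_of_le N.cast_nonneg fun t ht => by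
    simp only [(hIoo.deriv isOpen_Ioo).deriv isOpen_Ioo ht]

lemma energy_nonneg (ω : PathSpace d N) : 0 ≤ energy d N ω :=
  intervalIntegral.integral_nonneg N.cast_nonneg fun _ _ => sq_nonneg _

lemma exists_isNaturalSpline_of_mem_Spline30 {S : PathSpace d N} (hS : S ∈ Spline30 d N) :
    ∃ u, IsNaturalSpline N u ∧ ∀ t, S t = u t := by
  obtain ⟨u, hu, hSu, hcubic, hu₀, hu_N⟩ := hS
  refine ⟨u, ⟨hu, fun i hi => ?_, hu₀, hu_N⟩, hSu⟩
  obtain ⟨a₀, a₁, a₂, a₃, hpiece⟩ := hcubic ⟨i, hi⟩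
  refine ⟨(2 : ℝ) • a₂, (6 : ℝ) • a₃, fun t ht => ?_⟩
  have hcubic'' := eqOn_deriv_deriv_of_eqOn_Icc (lt_add_one (i : ℝ))
    hu.deriv'.continuous_deriv_one (by rw [deriv_deriv_cubic]; fun_prop) hpiece ht
  rw [hcubic'', deriv_deriv_cubic, smul_smul, mul_comm]

theorem dist_sq_le_mul_energy_sub (hN : 1 ≤ N) {S ω : PathSpace d N} (hS : S ∈ Spline30 d N)
    (hω : ω ∈ C2paths d N) (h_knots : ∀ i ≤ N, pathExt d N ω i = pathExt d N S i) :
    dist ω S ^ 2 ≤ (N : ℝ) ^ 3 * (energy d N ω - energy d N S) := by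
  obtain ⟨u, hu, hSu⟩ := exists_isNaturalSpline_of_mem_Spline30 hS
  obtain ⟨f, hf, hωf⟩ := hω
  have hfu : ∀ i ≤ N, f i = u i := fun i hi => by
    have hi' : (i : ℝ) ∈ Icc (0 : ℝ) N := ⟨i.cast_nonneg, by exact_mod_cast hi⟩
    simpa [pathExt_of_mem _ hi', hωf, hSu] using h_knots i hi
  have hpt : ∀ t : Icc (0 : ℝ) N, dist (ω t) (S t) ^ 2 ≤
      (N : ℝ) ^ 3 * (energy d N ω - energy d N S) := fun t => by
    rw [energy_eq_integral hωf, energy_eq_integral hSu, hωf, hSu, dist_eq_norm]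
    exact hu.sq_norm_sub_le hN hf hfu t.2
  have hq := (sq_nonneg _).trans (hpt ⟨0, left_mem_Icc.2 N.cast_nonneg⟩)
  rw [← Real.le_sqrt dist_nonneg hq, ContinuousMap.dist_le (Real.sqrt_nonneg _)]
  exact fun t => (Real.le_sqrt dist_nonneg hq).2 (hpt t)

def IsPathPrimitive (u v : PathSpace d N) : Prop :=
  ∀ t ∈ Icc (0 : ℝ) N, pathExt d N u t = pathExt d N u 0 + ∫ r in (0 : ℝ)..t, pathExt d N v r

lemma isClosed_setOf_isPathPrimitive :
    IsClosed {p : PathSpace d N × PathSpace d N | IsPathPrimitive p.1 p.2} := by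
  simp only [IsPathPrimitive, ofPred_forall]
  refine isClosed_biInter fun t _ => isClosed_eq ?_ ?_
  · exact continuous_pathExt_uncurry.comp (continuous_fst.prodMk continuous_const)
  · exact (continuous_pathExt_uncurry.comp (continuous_fst.prodMk continuous_const)).add
      (intervalIntegral.continuous_parametric_intervalIntegral_of_continuous'
        (f := fun (p : PathSpace d N × PathSpace d N) r => pathExt d N p.2 r)
        (continuous_pathExt_uncurry.comp
          ((continuous_snd.comp continuous_fst).prodMk continuous_snd)) 0 t)

lemma IsPathPrimitive.hasDerivAt {u v : PathSpace d N} (h : IsPathPrimitive u v) {t : ℝ}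
    (ht : t ∈ Ioo (0 : ℝ) N) : HasDerivAt (pathExt d N u) (pathExt d N v t) t :=
  (((continuous_pathExt v).integral_hasStrictDerivAt 0 t).hasDerivAt.const_add
    (pathExt d N u 0)).congr_of_eventuallyEq <|
      Filter.eventually_of_mem (Ioo_mem_nhds ht.1 ht.2) fun s hs => h s (Ioo_subset_Icc_self hs)

lemma IsPathPrimitive.unique (hN : 0 < N) {u v v' : PathSpace d N} (h : IsPathPrimitive u v)
    (h' : IsPathPrimitive u v') : v = v' := by
  have hIoo : EqOn (pathExt d N v) (pathExt d N v') (Ioo 0 N) := fun t ht =>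
    (h.hasDerivAt ht).unique (h'.hasDerivAt ht)
  have hIcc := hIoo.closure (continuous_pathExt v) (continuous_pathExt v')
  rw [closure_Ioo (Nat.cast_ne_zero.2 hN.ne').symm] at hIcc
  ext1 t
  simpa [pathExt_of_mem _ t.2] using hIcc t.2

lemma isPathPrimitive_of_hasDerivAt {u v : PathSpace d N} {f f' : ℝ → EuclideanSpace ℝ (Fin d)}
    (hf : ∀ t, HasDerivAt f (f' t) t) (hf' : Continuous f') (hu : ∀ t, u t = f t)
    (hv : ∀ t, v t = f' t) : IsPathPrimitive u v := by
  have h₀ : (0 : ℝ) ∈ Icc (0 : ℝ) N := left_mem_Icc.2 N.cast_nonneg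
  intro t ht
  have hcongr : EqOn (pathExt d N v) f' (uIcc 0 t) := fun r hr => by
    rw [pathExt_of_mem v (uIcc_subset_Icc h₀ ht hr), hv]
  rw [intervalIntegral.integral_congr hcongr,
    intervalIntegral.integral_eq_sub_of_hasDerivAt (fun r _ => hf r) (hf'.intervalIntegrable _ _),
    pathExt_of_mem u ht, pathExt_of_mem u h₀, hu, hu, add_sub_cancel]

lemma mem_C2paths_of_isPathPrimitive {u v w : PathSpace d N} (huv : IsPathPrimitive u v)
    (hvw : IsPathPrimitive v w) : u ∈ C2paths d N := by
  have h₀ : (0 : ℝ) ∈ Icc (0 : ℝ) N := left_mem_Icc.2 N.cast_nonneg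
  set f' : ℝ → EuclideanSpace ℝ (Fin d) := fun t =>
    pathExt d N v 0 + ∫ r in (0 : ℝ)..t, pathExt d N w r
  have hf' : ∀ t, HasDerivAt f' (pathExt d N w t) t := fun t =>
    ((continuous_pathExt w).integral_hasStrictDerivAt 0 t).hasDerivAt.const_add _
  have hf'_cont : Continuous f' := continuous_iff_continuousAt.2 fun t => (hf' t).continuousAt
  have hf : ∀ t, HasDerivAt (fun t => pathExt d N u 0 + ∫ r in (0 : ℝ)..t, f' r) (f' t) t :=
    fun t => (hf'_cont.integral_hasStrictDerivAt 0 t).hasDerivAt.const_add _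
  refine ⟨_, contDiff_two_of_hasDerivAt hf hf' (continuous_pathExt w), fun t => ?_⟩
  have hcongr : EqOn f' (pathExt d N v) (uIcc 0 t) := fun r hr =>
    (hvw r (uIcc_subset_Icc h₀ t.2 hr)).symm
  rw [intervalIntegral.integral_congr hcongr, ← huv t t.2, pathExt_of_mem u t.2]

lemma C2paths_eq_image :
    C2paths d N = Prod.fst '' {z : PathSpace d N × PathSpace d N × PathSpace d N |
      IsPathPrimitive z.1 z.2.1 ∧ IsPathPrimitive z.2.1 z.2.2} := by
  ext ω
  constructor
  · rintro ⟨f, hf, hωf⟩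
    have hf' := hf.continuous_deriv one_le_two
    have hf'' := hf.deriv'.continuous_deriv_one
    refine ⟨(ω, ⟨fun t => deriv f t, hf'.comp continuous_subtype_val⟩,
      ⟨fun t => deriv (deriv f) t, hf''.comp continuous_subtype_val⟩), ⟨?_, ?_⟩, rfl⟩
    · exact isPathPrimitive_of_hasDerivAt (fun t => (hf.differentiable two_ne_zero t).hasDerivAt)
        hf' hωf fun _ => rfl
    · exact isPathPrimitive_of_hasDerivAt (fun t => (hf.differentiable_deriv_two t).hasDerivAt)
        hf'' (fun _ => rfl) fun _ => rfl
  · rintro ⟨z, ⟨huv, hvw⟩, rfl⟩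
    exact mem_C2paths_of_isPathPrimitive huv hvw

theorem measurableSet_C2paths (hN : 0 < N) : MeasurableSet (C2paths d N) := by
  -- instance search does not find this factor when it looks for `PolishSpace` of the product
  have : PolishSpace (PathSpace d N) := inferInstance
  rw [C2paths_eq_image]
  refine IsClosed.measurableSet_image_of_continuousOn_injOn ?_ continuous_fst.continuousOn ?_
  · exact (isClosed_setOf_isPathPrimitive.preimage (continuous_fst.prodMk
      (continuous_fst.comp continuous_snd))).inter
      (isClosed_setOf_isPathPrimitive.preimage continuous_snd)
  · rintro ⟨u, v, w⟩ ⟨huv, hvw⟩ ⟨u', v', w'⟩ ⟨huv', hvw'⟩ (rfl : u = u')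
    obtain rfl : v = v' := huv.unique hN huv'
    obtain rfl : w = w' := hvw.unique hN hvw'
    rfl

end PathSpace

theorem stmt5_general (d N : ℕ) (hN : 1 ≤ N)
    (x : Fin (N + 1) → EuclideanSpace ℝ (Fin d))
    (S : PathSpace d N) (hS : S ∈ Spline30 d N)
    (hSx : ∀ i : Fin (N + 1), pathExt d N S ((i : ℕ) : ℝ) = x i)
    (P : Measure (PathSpace d N)) (hP : IsProbabilityMeasure P)
    (hP2 : P (C2paths d N) = 1)
    (hPx : ∀ i : Fin (N + 1),
      P.map (fun ω => pathExt d N ω ((i : ℕ) : ℝ)) = Measure.dirac (x i)) :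
    ENNReal.ofReal (energy d N S) ≤ ∫⁻ ω, ENNReal.ofReal (energy d N ω) ∂P ∧
    ((∫⁻ ω, ENNReal.ofReal (energy d N ω) ∂P) = ENNReal.ofReal (energy d N S) ↔
      P = Measure.dirac S) := by
  have hC2 : ∀ᵐ ω ∂P, ω ∈ C2paths d N :=
    (ae_mem_iff_measure_eq (measurableSet_C2paths hN).nullMeasurableSet).2
      (by rw [hP2, measure_univ])
  have h_knots : ∀ᵐ ω ∂P, ∀ i : Fin (N + 1), pathExt d N ω i = x i :=
    ae_all_iff.2 fun i => ae_eq_of_map_eq_dirac (continuous_eval_const _).aemeasurable (hPx i)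
  refine ofReal_le_lintegral_and_lintegral_eq_iff_eq_dirac (pow_pos (Nat.cast_pos.2 hN) 3)
    (energy_nonneg S) ?_
  filter_upwards [hC2, h_knots] with ω hω hωx
  exact dist_sq_le_mul_energy_sub hN hS hω fun i hi =>
    (hωx ⟨i, Nat.lt_succ_of_le hi⟩).trans (hSx ⟨i, Nat.lt_succ_of_le hi⟩).symm

/-- If `S ∈ 𝒮₃⁰` interpolates the points `x i` at the integer times, then any probability
measure `P` on path space concentrated on C² paths whose time-`i` marginals are the Dirac
measures `δ_{x i}` has mean energy at least the energy of `S`, with equality iff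
`P = δ_S`. -/
theorem stmt5 (d N : ℕ) (hd : 1 ≤ d) (hN : 1 ≤ N)
    (x : Fin (N + 1) → EuclideanSpace ℝ (Fin d))
    (S : PathSpace d N) (hS : S ∈ Spline30 d N)
    (hSx : ∀ i : Fin (N + 1), pathExt d N S ((i : ℕ) : ℝ) = x i)
    (P : Measure (PathSpace d N)) (hP : IsProbabilityMeasure P)
    (hP2 : P (C2paths d N) = 1)
    (hPx : ∀ i : Fin (N + 1),
      P.map (fun ω => pathExt d N ω ((i : ℕ) : ℝ)) = Measure.dirac (x i)) :
    ENNReal.ofReal (energy d N S) ≤ ∫⁻ ω, ENNReal.ofReal (energy d N ω) ∂P ∧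
    ((∫⁻ ω, ENNReal.ofReal (energy d N ω) ∂P) = ENNReal.ofReal (energy d N S) ↔
      P = Measure.dirac S) :=
  stmt5_general d N hN x S hS hSx P hP hP2 hPx
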